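/- For every natural number n, the metric space 𝒳_n, consisting of all finite subsets of ℝ_{≥0} that contain the point 0 and have at most n+1 elements, endowed with the Hausdorff distance, has asymptotic dimension at most n. -/
import Mathlib


open Metric TopologicalSpace

/-- The asymptotic dimension of a (pseudo)metric space `X` is at most `n`:
for every `r > 0` there is a cover `𝒰 = 𝒰₀ ∪ ⋯ ∪ 𝒰ₙ` of `X` which is uniformly bounded
and such that each `𝒰ᵢ` is `r`-disjoint (the infimum of distances between two distinct
members of `𝒰ᵢ` is greater than `r`). -/
def AsdimLE (X : Type*) [PseudoMetricSpace X] (n : ℕ) : Prop :=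
  ∀ r : ℝ, 0 < r → ∃ 𝒰 : Fin (n + 1) → Set (Set X),
    (⋃ i, ⋃₀ 𝒰 i) = Set.univ ∧
    (∃ R : ℝ, 0 ≤ R ∧ ∀ i, ∀ U ∈ 𝒰 i, EMetric.diam U ≤ ENNReal.ofReal R) ∧
    (∀ i, ∀ U ∈ 𝒰 i, ∀ V ∈ 𝒰 i, U ≠ V →
      ENNReal.ofReal r < ⨅ y ∈ U, ⨅ z ∈ V, edist y z)

namespace AsdimXnAux

/-- The grid-box index of `a` for the grid of mesh `4r(n+1)` shifted by `4ri`. -/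
noncomputable def q (n : ℕ) (r : ℝ) (i : ℕ) (a : ℝ) : ℤ :=
  ⌊(a - 4*r*i) / (4*r*(n+1))⌋

/-- `a` is deep inside its grid box for color `i` (at distance `≥ 2r` from the walls). -/
def good (n : ℕ) (r : ℝ) (i : ℕ) (a : ℝ) : Prop :=
  2*r ≤ (a - 4*r*i) - 4*r*(n+1) * q n r i a ∧
  (a - 4*r*i) - 4*r*(n+1) * q n r i a ≤ 4*r*(n+1) - 2*r

lemma L_pos {r : ℝ} (hr : 0 < r) (n : ℕ) : 0 < 4*r*(n+1) := by positivity

lemma frac_nonneg {r : ℝ} (hr : 0 < r) (n i : ℕ) (a : ℝ) :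
    0 ≤ (a - 4*r*i) - 4*r*(n+1) * q n r i a := by
  have h := Int.sub_floor_div_mul_nonneg (a - 4*r*i) (L_pos hr n)
  unfold q; linarith [h]

lemma frac_lt {r : ℝ} (hr : 0 < r) (n i : ℕ) (a : ℝ) :
    (a - 4*r*i) - 4*r*(n+1) * q n r i a < 4*r*(n+1) := by
  have h := Int.sub_floor_div_mul_lt (a - 4*r*i) (L_pos hr n)
  unfold q; linarith [h]

/-- Points in the same box are at distance `< 4r(n+1)`. -/
lemma abs_lt_of_q_eq {r : ℝ} (hr : 0 < r) {n i : ℕ} {a b : ℝ}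
    (h : q n r i a = q n r i b) : |a - b| < 4*r*(n+1) := by
  have ha0 := frac_nonneg hr n i a
  have ha1 := frac_lt hr n i a
  have hb0 := frac_nonneg hr n i b
  have hb1 := frac_lt hr n i b
  rw [h] at ha0 ha1
  rw [abs_lt]; constructor <;> nlinarith

/-- If `a` is deep inside its box and `b` is `2r`-close to `a`, then `b` is in the same box. -/
lemma q_eq_of_close {r : ℝ} (hr : 0 < r) {n i : ℕ} {a b : ℝ}
    (hg : good n r i a) (hab : |b - a| < 2*r) : q n r i b = q n r i a := by
  have hL := L_pos hr n
  obtain ⟨h1, h2⟩ := hg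
  have hb : 4*r*(n+1) * (q n r i a) < b - 4*r*i ∧
      b - 4*r*i < 4*r*(n+1) * (q n r i a) + 4*r*(n+1) := by
    rw [abs_lt] at hab; constructor <;> nlinarith
  show ⌊(b - 4*r*i) / (4*r*(n+1))⌋ = q n r i a
  rw [Int.floor_eq_iff]
  constructor
  · rw [le_div_iff₀ hL]; nlinarith [hb.1]
  · rw [div_lt_iff₀ hL]; nlinarith [hb.2]

/-- A non-good point is within `2r` of a grid wall of color `i`. -/
lemma exists_close_wall {r : ℝ} (hr : 0 < r) {n i : ℕ} {a : ℝ}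
    (h : ¬ good n r i a) : ∃ m : ℤ, |a - 4*r*i - 4*r*(n+1) * m| < 2*r := by
  unfold good at h
  push_neg at h
  by_cases h1 : 2*r ≤ a - 4*r*i - 4*r*(n+1) * q n r i a
  · have h2 := h h1
    refine ⟨q n r i a + 1, ?_⟩
    have := frac_lt hr n i a
    rw [abs_lt]; push_cast; constructor <;> nlinarith
  · push_neg at h1
    refine ⟨q n r i a, ?_⟩
    have := frac_nonneg hr n i a
    rw [abs_lt]; constructor <;> nlinarith

/-- A single point cannot be close to walls of two distinct colors `i < j ≤ n`. -/
lemma kills_at_most_one {r : ℝ} (hr : 0 < r) {n i j : ℕ} (hij : i < j) (hj : j ≤ n)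
    {a : ℝ} {m m' : ℤ} (hi : |a - 4*r*i - 4*r*(n+1) * m| < 2*r)
    (hj' : |a - 4*r*j - 4*r*(n+1) * m'| < 2*r) : False := by
  rw [abs_lt] at hi hj'
  set c : ℤ := (j : ℤ) - i + (n+1) * (m' - m) with hc
  have hcR : (c : ℝ) = ((j:ℝ) - i + ((n:ℝ)+1) * ((m':ℝ) - m)) := by rw [hc]; push_cast; ring
  have hcabs : |(c : ℝ)| < 1 := by
    rw [abs_lt, hcR]
    have h4r : 0 < 4*r := by linarith
    constructor <;> nlinarith [hi.1, hi.2, hj'.1, hj'.2]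
  have hc0 : c = 0 := by
    have h1 : |c| < 1 := by exact_mod_cast hcabs
    rw [abs_lt] at h1
    omega
  rw [hc] at hc0
  have h1 : (j : ℤ) - i = (n+1) * (m - m') := by linear_combination hc0
  have h2 : 0 < (j : ℤ) - i := by
    have : (i : ℤ) < j := by exact_mod_cast hij
    omega
  have h3 : (j : ℤ) - i ≤ n := by
    have : (j : ℤ) ≤ n := by exact_mod_cast hj
    omega
  rcases le_or_gt (m - m') 0 with ht | ht
  · have : (n+1 : ℤ) * (m - m') ≤ 0 := mul_nonpos_of_nonneg_of_nonpos (by positivity) ht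
    omega
  · have : (n+1 : ℤ) * 1 ≤ (n+1) * (m - m') := by
      apply mul_le_mul_of_nonneg_left (by omega) (by positivity)
    omega

/-- Every admissible set has a color for which all its nonzero points are good. -/
lemma exists_good_color {r : ℝ} (hr : 0 < r) {n : ℕ} {A : Set ℝ}
    (hfin : A.Finite) (h0 : 0 ∈ A) (hcard : A.ncard ≤ n + 1) :
    ∃ i : Fin (n+1), ∀ a ∈ A, a ≠ 0 → good n r (i : ℕ) a := by
  classical
  by_contra h
  push_neg at h
  choose f hfA hf0 hfbad using h
  have hfin' : (A \ {0}).Finite := hfin.subset Set.diff_subset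
  have hcard' : (A \ {0}).ncard ≤ n := by
    have := Set.ncard_diff_singleton_lt_of_mem h0 hfin
    omega
  have hmaps : ∀ i : Fin (n+1), i ∈ Finset.univ → f i ∈ hfin'.toFinset := by
    intro i _
    simp only [Set.Finite.mem_toFinset, Set.mem_diff, Set.mem_singleton_iff]
    exact ⟨hfA i, hf0 i⟩
  have hlt : hfin'.toFinset.card < Finset.univ.card (α := Fin (n+1)) := by
    rw [Finset.card_univ, Fintype.card_fin]
    have : hfin'.toFinset.card = (A \ {0}).ncard := (Set.ncard_eq_toFinset_card _ hfin').symm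
    omega
  obtain ⟨i, _, j, _, hij, hfij⟩ :=
    Finset.exists_ne_map_eq_of_card_lt_of_maps_to hlt hmaps
  obtain ⟨m, hm⟩ := exists_close_wall hr (hfbad i)
  obtain ⟨m', hm'⟩ := exists_close_wall hr (hfbad j)
  rw [hfij] at hm
  rcases lt_or_gt_of_ne (fun h => hij (Fin.ext h) : (i : ℕ) ≠ (j : ℕ)) with h | h
  · exact kills_at_most_one hr h (Nat.lt_succ_iff.1 j.isLt) hm hm'
  · exact kills_at_most_one hr h (Nat.lt_succ_iff.1 i.isLt) hm' hm

/-- Two sets occupying the same boxes of color `i` are Hausdorff-close. -/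
lemma hausdorffDist_le_of_q_image_eq {r : ℝ} (hr : 0 < r) {n i : ℕ} {A B : Set ℝ}
    (h : q n r i '' A = q n r i '' B) : hausdorffDist A B ≤ 4*r*(n+1) := by
  have key : ∀ (S T : Set ℝ), q n r i '' S = q n r i '' T →
      ∀ a ∈ S, ∃ b ∈ T, dist a b ≤ 4*r*(n+1) := by
    intro S T hST a ha
    have : q n r i a ∈ q n r i '' T := hST ▸ ⟨a, ha, rfl⟩
    obtain ⟨b, hb, hq⟩ := this
    exact ⟨b, hb, le_of_lt (by rw [Real.dist_eq]; exact abs_lt_of_q_eq hr hq.symm)⟩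
  exact hausdorffDist_le_of_mem_dist (le_of_lt (L_pos hr n)) (key A B h) (key B A h.symm)

/-- Two sets (all of whose nonzero points are good for color `i`, resp. containing `0`)
occupying different boxes of color `i` are Hausdorff-far. -/
lemma two_r_le_hausdorffDist {r : ℝ} (hr : 0 < r) {n i : ℕ} {A B : Set ℝ} {k : ℤ}
    (hAne : A.Nonempty) (hAbd : Bornology.IsBounded A)
    (hBne : B.Nonempty) (hBbd : Bornology.IsBounded B)
    (hgood : ∀ a ∈ A, a ≠ 0 → good n r i a) (h0B : 0 ∈ B)
    (hk : k ∈ q n r i '' A) (hk' : k ∉ q n r i '' B) :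
    2*r ≤ hausdorffDist A B := by
  by_contra hlt
  push_neg at hlt
  have fin : EMetric.hausdorffEdist A B ≠ ⊤ :=
    hausdorffEdist_ne_top_of_nonempty_of_bounded hAne hBne hAbd hBbd
  obtain ⟨a, haA, rfl⟩ := hk
  have hinf : infDist a B < 2*r := lt_of_le_of_lt (infDist_le_hausdorffDist_of_mem haA fin) hlt
  obtain ⟨b, hbB, hab⟩ := (infDist_lt_iff hBne).1 hinf
  by_cases ha0 : a = 0
  · subst ha0; exact hk' ⟨0, h0B, rfl⟩
  · have : q n r i b = q n r i a := by
      apply q_eq_of_close hr (hgood a haA ha0)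
      rw [Real.dist_eq] at hab
      rw [abs_sub_comm]; exact hab
    exact hk' ⟨b, hbB, this⟩

end AsdimXnAux

theorem asdim_Xn_le (n : ℕ) :
    AsdimLE {A : NonemptyCompacts ℝ // (A : Set ℝ).Finite ∧ (A : Set ℝ).ncard ≤ n + 1 ∧
      (0 : ℝ) ∈ (A : Set ℝ) ∧ (A : Set ℝ) ⊆ Set.Ici (0 : ℝ)} n := by
  classical
  intro r hr
  set X := {A : NonemptyCompacts ℝ // (A : Set ℝ).Finite ∧ (A : Set ℝ).ncard ≤ n + 1 ∧
      (0 : ℝ) ∈ (A : Set ℝ) ∧ (A : Set ℝ) ⊆ Set.Ici (0 : ℝ)} with hX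
  set piece : Fin (n+1) → Set ℤ → Set X := fun i S =>
    {A | (∀ a ∈ (A.1 : Set ℝ), a ≠ 0 → AsdimXnAux.good n r (i : ℕ) a) ∧
      AsdimXnAux.q n r (i : ℕ) '' (A.1 : Set ℝ) = S} with hpiece
  refine ⟨fun i => {U | ∃ S : Set ℤ, U = piece i S}, ?_, ⟨4*r*(n+1), by positivity, ?_⟩, ?_⟩
  · -- covering
    apply Set.eq_univ_of_forall
    intro A
    obtain ⟨i, hi⟩ := AsdimXnAux.exists_good_color hr A.2.1 A.2.2.2.1 A.2.2.1
    refine Set.mem_iUnion.2 ⟨i, Set.mem_sUnion.2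
      ⟨piece i (AsdimXnAux.q n r (i : ℕ) '' (A.1 : Set ℝ)), ⟨_, rfl⟩, hi, rfl⟩⟩
  · -- uniformly bounded
    rintro i U ⟨S, rfl⟩
    apply EMetric.diam_le
    intro A hA B hB
    rw [edist_dist]
    apply ENNReal.ofReal_le_ofReal
    have hAB : AsdimXnAux.q n r (i : ℕ) '' (A.1 : Set ℝ) =
        AsdimXnAux.q n r (i : ℕ) '' (B.1 : Set ℝ) := by rw [hA.2, hB.2]
    calc dist A B = hausdorffDist (A.1 : Set ℝ) (B.1 : Set ℝ) := rfl
      _ ≤ 4*r*(n+1) := AsdimXnAux.hausdorffDist_le_of_q_image_eq hr hAB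
  · -- r-disjointness
    rintro i U ⟨S, rfl⟩ V ⟨S', rfl⟩ hUV
    have hlt : ENNReal.ofReal r < ENNReal.ofReal (2*r) := by
      rw [ENNReal.ofReal_lt_ofReal_iff (by linarith)]; linarith
    refine lt_of_lt_of_le hlt (le_iInf₂ fun A hA => le_iInf₂ fun B hB => ?_)
    have hSS' : S ≠ S' := by
      rintro rfl; exact hUV rfl
    have hq : AsdimXnAux.q n r (i : ℕ) '' (A.1 : Set ℝ) = S := hA.2
    have hq' : AsdimXnAux.q n r (i : ℕ) '' (B.1 : Set ℝ) = S' := hB.2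
    have key : 2*r ≤ hausdorffDist (A.1 : Set ℝ) (B.1 : Set ℝ) := by
      by_cases hss : S ⊆ S'
      · obtain ⟨k, hkS', hkS⟩ := Set.not_subset.1 (fun h => hSS' (Set.Subset.antisymm hss h))
        rw [hausdorffDist_comm]
        exact AsdimXnAux.two_r_le_hausdorffDist hr B.1.nonempty B.1.isCompact.isBounded
          A.1.nonempty A.1.isCompact.isBounded hB.1 A.2.2.2.1
          (hq' ▸ hkS') (hq ▸ hkS)
      · obtain ⟨k, hkS, hkS'⟩ := Set.not_subset.1 hss
        exact AsdimXnAux.two_r_le_hausdorffDist hr A.1.nonempty A.1.isCompact.isBounded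
          B.1.nonempty B.1.isCompact.isBounded hA.1 B.2.2.2.1
          (hq ▸ hkS) (hq' ▸ hkS')
    rw [edist_dist]
    apply ENNReal.ofReal_le_ofReal
    calc (2:ℝ)*r ≤ hausdorffDist (A.1 : Set ℝ) (B.1 : Set ℝ) := key
      _ = dist A B := rfl
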